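/- (Lemma 2: three mutually unbiased bases in every dimension.) Let d ∈ ℕ with d ≥ 2, let f : {0,…,d−1} → ℝ be any function, let r ∈ ℕ ∪ {0}, and let p be an odd prime with gcd(d, p) = 1 and d > p^r. Define vectors in ℂ^d by e¹_a = the a-th standard basis vector, e²_a = (1/√d) Σ_{j=0}^{d-1} exp(2πi(aj/d + f(j))) e_j, and e³_a = (1/√d) Σ_{j=0}^{d-1} exp(2πi((d − p^r) j²/(2d) + aj/d + f(j))) e_j, for a = 0,…,d−1. Then {e¹_a}, {e²_a}, {e³_a} are each orthonormal bases of ℂ^d, and they are pairwise mutually unbiased: |⟨e^z_a, e^{z'}_b⟩|² = 1/d for all z ≠ z' in {1,2,3} and all a, b ∈ {0,…,d−1}. -/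

import Mathlib

/-!
`e¹` is the standard basis and `e²`, `e³` are the Fourier basis twisted by a diagonal phase
(`θ = f`, resp. `θ j = A j² / (2d) + f j` with `A = d − p^r`), so orthonormality of each and
unbiasedness against `e¹` follow from orthogonality of the characters `j ↦ exp(2πi n j / d)` and
from all entries having modulus `d^{-1/2}`. The inner product `⟨e²_a, e³_b⟩` is `d⁻¹` times a
quadratic Gauss sum `G = Σ_j ψ j`, `ψ j = exp(πi(A j² + 2 B j)/d)`. As `p` is odd, `A d` is even,
which makes `ψ` `d`-periodic; then `ψ (k + t) · conj (ψ k) = ψ t · exp(2πi A t k / d)` gives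
`|G|² = Σ_t ψ t Σ_k exp(2πi A t k / d)`, and since `A` is prime to `d` only `t = 0` survives:
`|G|² = d`.
-/

open Matrix BigOperators

/-- The three bases of Lemma 2: `e¹_a` is the standard basis,
`e²_a = (1/√d) Σ_j exp(2πi(aj/d + f(j))) e_j`, and
`e³_a = (1/√d) Σ_j exp(2πi((d − p^r)j²/(2d) + aj/d + f(j))) e_j`. -/
noncomputable def mubE (d : ℕ) (f : Fin d → ℝ) (r p : ℕ) :
    Fin 3 → Fin d → Fin d → ℂ :=
  ![fun a j => if j = a then (1 : ℂ) else 0,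
    fun a j => ((Real.sqrt d : ℂ))⁻¹ *
      Complex.exp (2 * Real.pi * Complex.I *
        (((a : ℕ) : ℂ) * ((j : ℕ) : ℂ) / d + ((f j : ℝ) : ℂ))),
    fun a j => ((Real.sqrt d : ℂ))⁻¹ *
      Complex.exp (2 * Real.pi * Complex.I *
        (((d : ℂ) - (p : ℂ) ^ r) * ((j : ℕ) : ℂ) ^ 2 / (2 * d) +
          ((a : ℕ) : ℂ) * ((j : ℕ) : ℂ) / d + ((f j : ℝ) : ℂ)))]

open Complex Finset Function
open scoped Real ComplexConjugate

section SumsOverFin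

variable {d : ℕ} [NeZero d]

theorem sum_exp_two_pi_I_int_mul_div (n : ℤ) :
    ∑ j : Fin d, exp (2 * π * I * (n * j / d)) = if (d : ℤ) ∣ n then (d : ℂ) else 0 := by
  have hζ := isPrimitiveRoot_exp d (NeZero.ne d)
  set ω := exp (2 * π * I / d) ^ n with hω_def
  have hω : ∀ j : ℕ, exp (2 * π * I * (n * j / d)) = ω ^ j := fun j => by
    rw [hω_def, ← exp_int_mul, ← exp_nat_mul]
    ring_nf
  have hω_one : ω = 1 ↔ (d : ℤ) ∣ n := hζ.zpow_eq_one_iff_dvd n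
  simp only [hω, Fin.sum_univ_eq_sum_range (ω ^ ·)]
  split_ifs with hdvd
  · simp [hω_one.mpr hdvd]
  · have hω_pow : ω ^ d = 1 := by
      rw [hω_def, ← zpow_natCast, ← _root_.zpow_mul, mul_comm n, _root_.zpow_mul, zpow_natCast,
        hζ.pow_eq_one, _root_.one_zpow]
    have hsum := geom_sum_mul ω d
    rw [hω_pow, sub_self] at hsum
    exact (mul_eq_zero.mp hsum).resolve_right (sub_ne_zero.mpr (mt hω_one.mp hdvd))

theorem Function.Periodic.sum_fin_add {M : Type*} [AddCommMonoid M] {ψ : ℕ → M}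
    (hψ : Periodic ψ d) (k : Fin d) : ∑ j : Fin d, ψ (k + j) = ∑ j : Fin d, ψ j := by
  calc ∑ j : Fin d, ψ (k + j) = ∑ j : Fin d, ψ ((k + j : Fin d) : ℕ) := by
        simp only [Fin.val_add, hψ.map_mod_nat]
    _ = ∑ j : Fin d, ψ j := Equiv.sum_comp (Equiv.addLeft k) (fun j => ψ j)

end SumsOverFin

section GaussSum

noncomputable def quadraticPhase (d : ℕ) (A B : ℤ) (n : ℕ) : ℂ :=
  exp (π * I * (A * n ^ 2 + 2 * B * n) / d)

variable {d : ℕ} {A B : ℤ}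

theorem quadraticPhase_periodic (hA : 2 ∣ A * d) : Periodic (quadraticPhase d A B) d := by
  obtain ⟨c, hc⟩ := hA
  intro n
  rcases eq_or_ne d 0 with rfl | hd
  · simp
  have hcC : (A : ℂ) * d = 2 * c := by exact_mod_cast hc
  -- the exponent grows by `πi (2 A n + A d + 2 B) = 2πi (A n + c + B)`
  rw [quadraticPhase, quadraticPhase, ← mul_one (exp (π * I * (A * n ^ 2 + 2 * B * n) / d)),
    ← exp_int_mul_two_pi_mul_I (A * n + c + B), ← exp_add]
  congr 1
  push_cast
  field_simp
  linear_combination (d : ℂ) * hcC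

theorem quadraticPhase_add_mul_conj (k t : ℕ) :
    quadraticPhase d A B (k + t) * conj (quadraticPhase d A B k) =
      quadraticPhase d A B t * exp (2 * π * I * ((A * t : ℤ) * k / d)) := by
  simp only [quadraticPhase, ← Complex.exp_conj, ← exp_add]
  congr 1
  simp only [map_div₀, map_mul, map_add, conj_ofReal, conj_I, map_pow, map_intCast, map_natCast,
    map_ofNat]
  push_cast
  ring

theorem norm_sum_quadraticPhase_sq [NeZero d] (hcop : IsCoprime A d) (hA : 2 ∣ A * d) :
    ‖∑ j : Fin d, quadraticPhase d A B j‖ ^ 2 = d := by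
  set ψ := quadraticPhase d A B
  have hnot_dvd (t : Fin d) (h : (d : ℤ) ∣ A * t) : t = 0 :=
    Fin.ext <| Nat.eq_zero_of_dvd_of_lt
      (Int.natCast_dvd_natCast.mp (hcop.symm.dvd_of_dvd_mul_left h)) t.isLt
  have key : (∑ j : Fin d, ψ j) * conj (∑ k : Fin d, ψ k) = d :=
    calc (∑ j : Fin d, ψ j) * conj (∑ k : Fin d, ψ k)
        = ∑ k : Fin d, ∑ t : Fin d, ψ (k + t) * conj (ψ k) := by
          rw [map_sum, mul_sum]
          refine sum_congr rfl fun k _ => ?_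
          rw [← sum_mul, (quadraticPhase_periodic hA).sum_fin_add k]
      _ = ∑ t : Fin d, ψ t * ∑ k : Fin d, exp (2 * π * I * ((A * t : ℤ) * k / d)) := by
          simp only [ψ, quadraticPhase_add_mul_conj, mul_sum]
          exact sum_comm
      _ = ∑ t : Fin d, ψ t * if t = 0 then (d : ℂ) else 0 := by
          refine sum_congr rfl fun t _ => ?_
          rw [sum_exp_two_pi_I_int_mul_div]
          congr 1
          exact if_congr ⟨hnot_dvd t, fun h => by simp [h]⟩ rfl rfl
      _ = d := by simp [ψ, quadraticPhase]
  rw [mul_conj, ← Complex.sq_norm] at key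
  exact_mod_cast key

end GaussSum

section PhaseVectors

noncomputable def phaseVector (d : ℕ) (φ : Fin d → ℝ) : Fin d → ℂ :=
  fun j => (Real.sqrt d : ℂ)⁻¹ * exp (2 * π * I * φ j)

variable {d : ℕ}

theorem norm_phaseVector_sq (φ : Fin d → ℝ) (j : Fin d) : ‖phaseVector d φ j‖ ^ 2 = 1 / d := by
  have h : 2 * π * I * φ j = (2 * π * φ j : ℝ) * I := by push_cast; ring
  rw [phaseVector, norm_mul, h, norm_exp_ofReal_mul_I, mul_one, norm_inv, norm_real,
    Real.norm_of_nonneg (Real.sqrt_nonneg _), inv_pow, Real.sq_sqrt d.cast_nonneg, one_div]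

theorem star_phaseVector_dotProduct (φ φ' : Fin d → ℝ) :
    star (phaseVector d φ) ⬝ᵥ phaseVector d φ' =
      (d : ℂ)⁻¹ * ∑ j : Fin d, exp (2 * π * I * (φ' j - φ j : ℝ)) := by
  have hsqrt : (Real.sqrt d : ℂ)⁻¹ * (Real.sqrt d : ℂ)⁻¹ = (d : ℂ)⁻¹ := by
    rw [← mul_inv, ← ofReal_mul, Real.mul_self_sqrt d.cast_nonneg, ofReal_natCast]
  have hconj (x : ℝ) : star (exp (2 * π * I * x)) = exp (-(2 * π * I * x)) := by
    rw [Complex.star_def, ← Complex.exp_conj]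
    simp [map_ofNat]
  simp only [dotProduct, mul_sum, Pi.star_apply, phaseVector, star_mul', star_inv₀, hconj,
    Complex.star_def, conj_ofReal]
  refine sum_congr rfl fun j _ => ?_
  rw [mul_mul_mul_comm, hsqrt, ← exp_add]
  push_cast
  ring_nf

end PhaseVectors

section TwistedFourier

noncomputable def twistedFourier (d : ℕ) (θ : Fin d → ℝ) (a : Fin d) : Fin d → ℂ :=
  phaseVector d fun j => (a : ℕ) * (j : ℕ) / d + θ j

variable {d : ℕ}

theorem Fin.natCast_dvd_val_sub_val_iff (a b : Fin d) : (d : ℤ) ∣ (b : ℕ) - (a : ℕ) ↔ a = b := by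
  refine ⟨fun h => Fin.ext ?_, fun h => by simp [h]⟩
  have := Int.eq_zero_of_abs_lt_dvd h (by rw [abs_lt]; omega)
  omega

variable [NeZero d]

theorem star_twistedFourier_dotProduct (θ : Fin d → ℝ) (a b : Fin d) :
    star (twistedFourier d θ a) ⬝ᵥ twistedFourier d θ b = if a = b then 1 else 0 := by
  have hphase (j : Fin d) : exp (2 * π * I * ((b * j / d + θ j) - (a * j / d + θ j) : ℝ)) =
      exp (2 * π * I * (((b : ℕ) - (a : ℕ) : ℤ) * j / d)) := by
    push_cast
    ring_nf
  simp only [twistedFourier, star_phaseVector_dotProduct, hphase, sum_exp_two_pi_I_int_mul_div,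
    Fin.natCast_dvd_val_sub_val_iff]
  split_ifs <;> simp [NeZero.ne]

theorem norm_star_twistedFourier_dotProduct_sq {A : ℤ} (hcop : IsCoprime A d) (hA : 2 ∣ A * d)
    (θ : Fin d → ℝ) (a b : Fin d) :
    ‖star (twistedFourier d θ a) ⬝ᵥ
        twistedFourier d (fun j => A * (j : ℕ) ^ 2 / (2 * d) + θ j) b‖ ^ 2 = 1 / d := by
  have hphase (j : Fin d) :
      exp (2 * π * I * ((b * j / d + (A * j ^ 2 / (2 * d) + θ j)) - (a * j / d + θ j) : ℝ)) =
        quadraticPhase d A ((b : ℕ) - (a : ℕ)) j := by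
    rw [quadraticPhase]
    push_cast
    ring_nf
  simp only [twistedFourier, star_phaseVector_dotProduct, hphase, norm_mul, mul_pow,
    norm_sum_quadraticPhase_sq hcop hA, norm_inv, norm_natCast]
  field_simp

end TwistedFourier

theorem star_single_one_dotProduct {n R : Type*} [Fintype n] [DecidableEq n] [Semiring R]
    [StarRing R] (i : n) (v : n → R) : star (Pi.single i (1 : R)) ⬝ᵥ v = v i := by
  rw [Pi.star_single, star_one, single_dotProduct, one_mul]

theorem isCoprime_sub_pow_of_gcd_eq_one {d p : ℕ} (hgcd : Nat.gcd d p = 1) (r : ℕ) :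
    IsCoprime ((d : ℤ) - p ^ r) d := by
  have hpd : IsCoprime ((p : ℤ) ^ r) d := by
    exact_mod_cast Nat.isCoprime_iff_coprime.mpr ((Nat.Coprime.symm hgcd).pow_left r)
  simpa [sub_eq_neg_add] using hpd.neg_left.add_mul_left_left 1

theorem two_dvd_sub_pow_mul_of_odd {p : ℕ} (hodd : Odd p) (d r : ℕ) :
    2 ∣ ((d : ℤ) - p ^ r) * d := by
  have hp : ¬Even ((p : ℤ) ^ r) := Int.not_even_iff_odd.mpr (by exact_mod_cast hodd.pow)
  rw [← even_iff_two_dvd, Int.even_mul, Int.even_sub]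
  tauto

section MubE

variable {d : ℕ} (f : Fin d → ℝ) (r p : ℕ)

theorem mubE_zero (a : Fin d) : mubE d f r p 0 a = Pi.single a 1 :=
  funext fun j => (Pi.single_apply a 1 j).symm

theorem mubE_one (a : Fin d) : mubE d f r p 1 a = twistedFourier d f a := by
  ext j
  simp only [mubE, twistedFourier, phaseVector, Matrix.cons_val_one, Matrix.cons_val_zero]
  push_cast
  ring_nf

theorem mubE_two (a : Fin d) :
    mubE d f r p 2 a =
      twistedFourier d (fun j => ((d - p ^ r : ℤ) : ℝ) * (j : ℕ) ^ 2 / (2 * d) + f j) a := by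
  ext j
  simp only [mubE, twistedFourier, phaseVector, Matrix.cons_val_two, Matrix.tail_cons,
    Matrix.head_cons]
  push_cast
  ring_nf

variable [NeZero d]

theorem star_mubE_dotProduct (z : Fin 3) (a b : Fin d) :
    star (mubE d f r p z a) ⬝ᵥ mubE d f r p z b = if a = b then 1 else 0 :=
  match z with
  | 0 => by rw [mubE_zero, mubE_zero, star_single_one_dotProduct, Pi.single_apply]
  | 1 => by rw [mubE_one, mubE_one, star_twistedFourier_dotProduct]
  | 2 => by rw [mubE_two, mubE_two, star_twistedFourier_dotProduct]

theorem norm_star_mubE_dotProduct_sq_of_lt (hodd : Odd p) (hgcd : Nat.gcd d p = 1)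
    {z z' : Fin 3} (hlt : z < z') (a b : Fin d) :
    ‖star (mubE d f r p z a) ⬝ᵥ mubE d f r p z' b‖ ^ 2 = 1 / d :=
  match z, z', hlt with
  | 0, 1, _ => by rw [mubE_zero, mubE_one, star_single_one_dotProduct, twistedFourier,
      norm_phaseVector_sq]
  | 0, 2, _ => by rw [mubE_zero, mubE_two, star_single_one_dotProduct, twistedFourier,
      norm_phaseVector_sq]
  | 1, 2, _ => by
    rw [mubE_one, mubE_two]
    exact norm_star_twistedFourier_dotProduct_sq (isCoprime_sub_pow_of_gcd_eq_one hgcd r)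
      (two_dvd_sub_pow_mul_of_odd hodd d r) f a b
  | 0, 0, h | 1, 0, h | 1, 1, h | 2, 0, h | 2, 1, h | 2, 2, h => absurd h (by decide)

end MubE

theorem stmt13_general (d : ℕ) (f : Fin d → ℝ) (r p : ℕ)
    (hodd : Odd p) (hgcd : Nat.gcd d p = 1) :
    (∀ z : Fin 3, ∀ a b : Fin d,
      star (mubE d f r p z a) ⬝ᵥ mubE d f r p z b = (if a = b then (1 : ℂ) else 0)) ∧
    (∀ z z' : Fin 3, z ≠ z' → ∀ a b : Fin d,
      ‖star (mubE d f r p z a) ⬝ᵥ mubE d f r p z' b‖ ^ 2 = 1 / d) := by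
  refine ⟨fun z a b => ?_, fun z z' hne a b => ?_⟩
  · have : NeZero d := NeZero.of_pos a.pos
    exact star_mubE_dotProduct f r p z a b
  · have : NeZero d := NeZero.of_pos a.pos
    rcases hne.lt_or_gt with hlt | hgt
    · exact norm_star_mubE_dotProduct_sq_of_lt f r p hodd hgcd hlt a b
    · rw [star_dotProduct, norm_star]
      exact norm_star_mubE_dotProduct_sq_of_lt f r p hodd hgcd hgt b a

/-- Lemma 2 (three mutually unbiased bases in every dimension): for any `d ≥ 2`, any
`f : {0,…,d−1} → ℝ`, any `r ∈ ℕ ∪ {0}` and any odd prime `p` with `gcd(d,p) = 1` and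
`d > p^r`, the three bases `{e¹_a}, {e²_a}, {e³_a}` are orthonormal bases of `ℂ^d` and are
pairwise mutually unbiased: `|⟨e^z_a, e^{z'}_b⟩|² = 1/d` for all `z ≠ z'` and all `a, b`. -/
theorem stmt13 (d : ℕ) (hd : 2 ≤ d) (f : Fin d → ℝ) (r p : ℕ)
    (hp : p.Prime) (hodd : Odd p) (hgcd : Nat.gcd d p = 1) (hdp : p ^ r < d) :
    (∀ z : Fin 3, ∀ a b : Fin d,
      star (mubE d f r p z a) ⬝ᵥ mubE d f r p z b = (if a = b then (1 : ℂ) else 0)) ∧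
    (∀ z z' : Fin 3, z ≠ z' → ∀ a b : Fin d,
      ‖star (mubE d f r p z a) ⬝ᵥ mubE d f r p z' b‖ ^ 2 = 1 / d) :=
  stmt13_general d f r p hodd hgcd
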